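/- If X̂ ∈ ℝ^{n×n} is a symmetric positive semidefinite matrix satisfying X̂ = D(X̂), then every iterate of the fixed point iteration satisfies X_t ⪯ X̂ for all t ≥ 0 (any positive semidefinite solution of the SDARE is an upper bound for the fixed point sequence). -/

import Mathlib

/-!
For `Z ⪰ 0`, the Riccati term `Aᴴ Z (1 + B Bᴴ Z)⁻¹ A` is the minimum, in the Loewner order, of the
quadratic cost `(A + B K)ᴴ Z (A + B K) + Kᴴ K` over all feedback gains `K`: completing the square
gives `cost K = riccati + (K - K*)ᴴ (1 + Bᴴ Z B) (K - K*)`. The cost is monotone in `Z` for every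
fixed `K`, hence so is its minimum, and `D` is monotone on positive semidefinite matrices. Starting
from `X₀ = 0 ⪯ X̂`, induction and `D(X̂) = X̂` give `X_t ⪯ X̂`.
-/

open Matrix
open scoped Kronecker

/-- The SDARE Riccati operator `D(X) = Aᵀ (X ⊗ I_r) (I + B Bᵀ (X ⊗ I_r))⁻¹ A + Cᵀ C`,
with `rn` realized as the index type `Fin n × Fin r`. -/
noncomputable def Dop {n m l r : ℕ}
    (A : Matrix (Fin n × Fin r) (Fin n) ℝ)
    (B : Matrix (Fin n × Fin r) (Fin m) ℝ)
    (C : Matrix (Fin l) (Fin n) ℝ)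
    (X : Matrix (Fin n) (Fin n) ℝ) : Matrix (Fin n) (Fin n) ℝ :=
  Aᵀ * (X ⊗ₖ (1 : Matrix (Fin r) (Fin r) ℝ)) *
      (1 + B * Bᵀ * (X ⊗ₖ (1 : Matrix (Fin r) (Fin r) ℝ)))⁻¹ * A + Cᵀ * C

open scoped MatrixOrder ComplexOrder

namespace Matrix

variable {𝕜 ι κ μ : Type*} [RCLike 𝕜] [Fintype ι] [DecidableEq ι] [Fintype μ] [DecidableEq μ]

noncomputable def riccati (Z : Matrix ι ι 𝕜) (A : Matrix ι κ 𝕜) (B : Matrix ι μ 𝕜) :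
    Matrix κ κ 𝕜 :=
  Aᴴ * Z * (1 + B * Bᴴ * Z)⁻¹ * A

def riccatiCost (Z : Matrix ι ι 𝕜) (A : Matrix ι κ 𝕜) (B : Matrix ι μ 𝕜)
    (K : Matrix μ κ 𝕜) : Matrix κ κ 𝕜 :=
  (A + B * K)ᴴ * Z * (A + B * K) + Kᴴ * K

noncomputable def riccatiGain (Z : Matrix ι ι 𝕜) (A : Matrix ι κ 𝕜) (B : Matrix ι μ 𝕜) :
    Matrix μ κ 𝕜 :=
  -((1 + Bᴴ * Z * B)⁻¹ * (Bᴴ * Z * A))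

variable {Z Z' : Matrix ι ι 𝕜} (A : Matrix ι κ 𝕜) (B : Matrix ι μ 𝕜)

omit [DecidableEq ι] in
lemma PosSemidef.posDef_one_add_conjTranspose_mul_mul (hZ : Z.PosSemidef) :
    (1 + Bᴴ * Z * B).PosDef :=
  PosDef.one.add_posSemidef (hZ.conjTranspose_mul_mul_same B)

lemma PosSemidef.riccati_eq (hZ : Z.PosSemidef) :
    riccati Z A B = Aᴴ * Z * A - Aᴴ * Z * B * (1 + Bᴴ * Z * B)⁻¹ * (Bᴴ * Z) * A := by
  have hM := (hZ.posDef_one_add_conjTranspose_mul_mul B).isUnit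
  have woodbury : (1 + B * Bᴴ * Z)⁻¹ = 1 - B * (1 + Bᴴ * Z * B)⁻¹ * (Bᴴ * Z) := by
    simpa [Matrix.mul_assoc] using
      add_mul_mul_inv_eq_sub (1 : Matrix ι ι 𝕜) B 1 (Bᴴ * Z) isUnit_one isUnit_one
        (by simpa [Matrix.mul_assoc] using hM)
  rw [riccati, Matrix.mul_assoc _ _ A, woodbury]
  simp only [Matrix.mul_sub, Matrix.sub_mul, Matrix.one_mul, Matrix.mul_assoc]

lemma PosSemidef.riccatiCost_eq (hZ : Z.PosSemidef) (K : Matrix μ κ 𝕜) :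
    riccatiCost Z A B K = riccati Z A B +
      (K - riccatiGain Z A B)ᴴ * (1 + Bᴴ * Z * B) * (K - riccatiGain Z A B) := by
  have hM := hZ.posDef_one_add_conjTranspose_mul_mul B
  set M := 1 + Bᴴ * Z * B
  set G := M⁻¹ * (Bᴴ * Z * A)
  have hMG : M * G = Bᴴ * Z * A := by
    rw [← Matrix.mul_assoc, mul_nonsing_inv _ ((isUnit_iff_isUnit_det _).mp hM.isUnit),
      Matrix.one_mul]
  have hGM : Gᴴ * M = Aᴴ * Z * B := by
    rw [← hM.isHermitian.eq, ← conjTranspose_mul, hMG]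
    simp only [conjTranspose_mul, hZ.isHermitian.eq, conjTranspose_conjTranspose,
      Matrix.mul_assoc]
  have hsq : (K + G)ᴴ * M * (K + G) =
      Kᴴ * M * K + Kᴴ * (M * G) + Gᴴ * M * K + Gᴴ * M * G := by
    simp only [conjTranspose_add, Matrix.add_mul, Matrix.mul_add, Matrix.mul_assoc]
    abel
  rw [riccatiGain, sub_neg_eq_add, hZ.riccati_eq, hsq, hMG, hGM]
  simp only [riccatiCost, M, G, conjTranspose_add, conjTranspose_mul, Matrix.add_mul,
    Matrix.mul_add, Matrix.mul_one, Matrix.mul_assoc]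
  abel

lemma riccatiCost_riccatiGain (hZ : 0 ≤ Z) :
    riccatiCost Z A B (riccatiGain Z A B) = riccati Z A B := by
  simp [hZ.posSemidef.riccatiCost_eq]

variable [Fintype κ]

lemma riccati_le_riccatiCost (hZ : 0 ≤ Z) (K : Matrix μ κ 𝕜) :
    riccati Z A B ≤ riccatiCost Z A B K := by
  rw [le_iff, hZ.posSemidef.riccatiCost_eq, add_sub_cancel_left]
  exact (hZ.posSemidef.posDef_one_add_conjTranspose_mul_mul B).posSemidef
    |>.conjTranspose_mul_mul_same _

omit [DecidableEq ι] in
lemma conjTranspose_mul_mul_le_conjTranspose_mul_mul (h : Z ≤ Z') (P : Matrix ι κ 𝕜) :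
    Pᴴ * Z * P ≤ Pᴴ * Z' * P := by
  rw [le_iff, ← Matrix.sub_mul, ← Matrix.mul_sub]
  exact (le_iff.mp h).conjTranspose_mul_mul_same P

omit [DecidableEq ι] [DecidableEq μ] in
lemma riccatiCost_mono (h : Z ≤ Z') (K : Matrix μ κ 𝕜) :
    riccatiCost Z A B K ≤ riccatiCost Z' A B K :=
  add_le_add_left (conjTranspose_mul_mul_le_conjTranspose_mul_mul h _) _

lemma riccati_mono (hZ : 0 ≤ Z) (h : Z ≤ Z') : riccati Z A B ≤ riccati Z' A B :=
  calc riccati Z A B ≤ riccatiCost Z A B (riccatiGain Z' A B) := riccati_le_riccatiCost A B hZ _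
    _ ≤ riccatiCost Z' A B (riccatiGain Z' A B) := riccatiCost_mono A B h _
    _ = riccati Z' A B := riccatiCost_riccatiGain A B (hZ.trans h)

lemma riccati_nonneg (hZ : 0 ≤ Z) : 0 ≤ riccati Z A B := by
  simpa [riccati] using riccati_mono A B le_rfl hZ

end Matrix

lemma Matrix.kronecker_le_kronecker_of_nonneg_right {𝕜 ι κ : Type*} [RCLike 𝕜]
    [Finite ι] [Finite κ] {X Y : Matrix ι ι 𝕜} {W : Matrix κ κ 𝕜} (h : X ≤ Y) (hW : 0 ≤ W) :
    X ⊗ₖ W ≤ Y ⊗ₖ W := by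
  have sub_kronecker : (Y - X) ⊗ₖ W = Y ⊗ₖ W - X ⊗ₖ W :=
    eq_sub_of_add_eq (by rw [← add_kronecker, sub_add_cancel])
  rw [le_iff, ← sub_kronecker]
  exact (le_iff.mp h).kronecker hW.posSemidef

section Dop

variable {n m l r : ℕ} (A : Matrix (Fin n × Fin r) (Fin n) ℝ)
  (B : Matrix (Fin n × Fin r) (Fin m) ℝ) (C : Matrix (Fin l) (Fin n) ℝ)
  {X Y : Matrix (Fin n) (Fin n) ℝ}

lemma Dop_eq_riccati :
    Dop A B C X = riccati (X ⊗ₖ (1 : Matrix (Fin r) (Fin r) ℝ)) A B + Cᵀ * C := by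
  simp only [Dop, riccati, conjTranspose_eq_transpose_of_trivial]

lemma Dop_nonneg (hX : 0 ≤ X) : 0 ≤ Dop A B C X := by
  rw [Dop_eq_riccati]
  refine add_nonneg (riccati_nonneg A B ?_) ?_
  · exact (hX.posSemidef.kronecker PosSemidef.one).nonneg
  · simpa [conjTranspose_eq_transpose_of_trivial] using (posSemidef_conjTranspose_mul_self C).nonneg

lemma Dop_mono (hX : 0 ≤ X) (h : X ≤ Y) : Dop A B C X ≤ Dop A B C Y := by
  simp only [Dop_eq_riccati]
  gcongr
  exact riccati_mono A B (hX.posSemidef.kronecker PosSemidef.one).nonneg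
    (kronecker_le_kronecker_of_nonneg_right h PosSemidef.one.nonneg)

end Dop

theorem stmt2_general {n m l r : ℕ}
    (A : Matrix (Fin n × Fin r) (Fin n) ℝ)
    (B : Matrix (Fin n × Fin r) (Fin m) ℝ)
    (C : Matrix (Fin l) (Fin n) ℝ)
    (Xseq : ℕ → Matrix (Fin n) (Fin n) ℝ)
    (h0 : Xseq 0 = 0)
    (hstep : ∀ t, Xseq (t + 1) = Dop A B C (Xseq t))
    (Xhat : Matrix (Fin n) (Fin n) ℝ)
    (hXhat : Xhat.PosSemidef) (hsol : Xhat = Dop A B C Xhat) :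
    ∀ t, (Xhat - Xseq t).PosSemidef := by
  intro t
  suffices h : 0 ≤ Xseq t ∧ Xseq t ≤ Xhat from h.2
  induction t with
  | zero => exact ⟨h0 ▸ le_rfl, h0 ▸ hXhat.nonneg⟩
  | succ t ih =>
    rw [hstep]
    exact ⟨Dop_nonneg A B C ih.1, hsol ▸ Dop_mono A B C ih.1 ih.2⟩

theorem stmt2 {n m l r : ℕ} (hn : 0 < n) (hm : 0 < m) (hl : 0 < l) (hr : 0 < r)
    (A : Matrix (Fin n × Fin r) (Fin n) ℝ)
    (B : Matrix (Fin n × Fin r) (Fin m) ℝ)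
    (C : Matrix (Fin l) (Fin n) ℝ)
    (Xseq : ℕ → Matrix (Fin n) (Fin n) ℝ)
    (h0 : Xseq 0 = 0)
    (hstep : ∀ t, Xseq (t + 1) = Dop A B C (Xseq t))
    (Xhat : Matrix (Fin n) (Fin n) ℝ)
    (hXhat : Xhat.PosSemidef) (hsol : Xhat = Dop A B C Xhat) :
    ∀ t, (Xhat - Xseq t).PosSemidef :=
  stmt2_general A B C Xseq h0 hstep Xhat hXhat hsol
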